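/- arXiv:1704.03745 — 2 statements merged into one kernel-verified Lean document; each statement's English description precedes it below -/
import Mathlib

section
/- Let μ = ν^ℤ be a product probability measure on Ω = X^ℤ with L²(ν) separable. If f ∈ L²(μ) is local with ∫f dμ = 0 and ∑_{z ∈ ℤ} ⟨f, τ_z f⟩_{L²(μ)} = 0, then there exists a local g ∈ L²(μ) with ∫g dμ = 0 such that f = τg − g, where τ = τ_1 is the unit shift. -/
open MeasureTheory ProbabilityTheory

/-- A function on `X^ℤ` is local if it depends only on finitely many coordinates. -/
def IsLocal {X : Type*} (f : (ℤ → X) → ℝ) : Prop :=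
  ∃ S : Finset ℤ, ∀ η η' : ℤ → X, (∀ x ∈ S, η x = η' x) → f η = f η'

/-- `μ` is the i.i.d. product measure `ν^ℤ` on `X^ℤ`. -/
def IsIIDProduct {X : Type*} [MeasurableSpace X] (ν : Measure X)
    (μ : Measure (ℤ → X)) : Prop :=
  iIndepFun (fun x η => η x) μ ∧
  ∀ x : ℤ, μ.map (fun η => η x) = ν

/-!
Let `f` depend on the coordinates in `[a, b]`, and let `P_k f = E[f | η_{≤k}] - E[f | η_{≤k-1}]`
be its martingale increments, so that `f = ∑_{k=a}^{b} P_k f`. With `F_z = τ_z f`, put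
`g = -∑_{z=0}^{b-a} E[F_z | η_{≤b-1}]`; telescoping in `z` gives `f = τg - g + D` with
`D = ∑_{z=0}^{b-a} P_b F_z`. By stationarity and the orthogonality of the increments,
`‖D‖² = ∑_x ∑_k ⟨P_k f, P_k τ_x f⟩ = ∑_x ⟨f, τ_x f⟩ = 0`, hence `f = τg - g` almost everywhere.

Conditional expectations are realised by resampling the coordinates outside the conditioning set,
so that locality, shift covariance and the telescoping identities hold pointwise.
-/

open Measure Finset

theorem MeasureTheory.MeasurePreserving.integral_comp_of_aestronglyMeasurable
    {α β E : Type*} [MeasurableSpace α] [MeasurableSpace β] [NormedAddCommGroup E]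
    [NormedSpace ℝ E] {μa : Measure α} {μb : Measure β} {f : α → β}
    (hf : MeasurePreserving f μa μb) {g : β → E} (hg : AEStronglyMeasurable g μb) :
    ∫ x, g (f x) ∂μa = ∫ y, g y ∂μb := by
  rw [← hf.map_eq] at hg ⊢
  exact (integral_map hf.measurable.aemeasurable hg).symm

theorem MeasureTheory.MemLp.integrable_fun_mul {α : Type*} [MeasurableSpace α] {μ : Measure α}
    {f g : α → ℝ} (hf : MemLp f 2 μ) (hg : MemLp g 2 μ) : Integrable (fun x => f x * g x) μ :=
  hf.integrable_mul hg

theorem Int.sum_Icc_sub {M : Type*} [AddCommGroup M] (G : ℤ → M) {a b : ℤ} (hab : a ≤ b + 1) :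
    ∑ k ∈ Icc a b, (G (k + 1) - G k) = G (b + 1) - G a := by
  induction b, (by omega : a - 1 ≤ b) using Int.leInduction with
  | base => simp
  | succ n hn ih =>
    rw [← insert_Icc_right_eq_Icc_add_one (by omega), sum_insert (by simp), ih (by omega)]
    abel

section Resampling

variable {ι X : Type*} [MeasurableSpace X]

theorem measurable_piecewise_prod (s : Set ι) [∀ i, Decidable (i ∈ s)] :
    Measurable fun p : (ι → X) × (ι → X) => s.piecewise p.1 p.2 := by
  refine measurable_pi_lambda _ fun i => ?_
  by_cases hi : i ∈ s
  · simp only [Set.piecewise, hi, if_true]; fun_prop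
  · simp only [Set.piecewise, hi, if_false]; fun_prop

variable (ν : Measure X) [IsProbabilityMeasure ν]

local notation "ℙ" => infinitePi fun _ : ι => ν

theorem measurePreserving_piecewise_prod (s : Set ι) [∀ i, Decidable (i ∈ s)] :
    MeasurePreserving (fun p : (ι → X) × (ι → X) => s.piecewise p.1 p.2) ((ℙ).prod ℙ) ℙ := by
  refine ⟨measurable_piecewise_prod s, eq_infinitePi _ fun t B hB => ?_⟩
  classical
  have hpre : (fun p : (ι → X) × (ι → X) => s.piecewise p.1 p.2) ⁻¹' (t : Set ι).pi B =
      (↑(t.filter (· ∈ s)) : Set ι).pi B ×ˢ (↑(t.filter (· ∉ s)) : Set ι).pi B := by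
    ext p
    simp only [Set.mem_preimage, Set.mem_pi, Set.mem_prod, coe_filter, Set.mem_ofPred_eq]
    refine ⟨fun h => ⟨fun i hi => ?_, fun i hi => ?_⟩, fun h i hi => ?_⟩
    · simpa [Set.piecewise_eq_of_mem _ _ _ hi.2] using h i hi.1
    · simpa [Set.piecewise_eq_of_notMem _ _ _ hi.2] using h i hi.1
    · by_cases his : i ∈ s
      · simpa [Set.piecewise_eq_of_mem _ _ _ his] using h.1 i ⟨hi, his⟩
      · simpa [Set.piecewise_eq_of_notMem _ _ _ his] using h.2 i ⟨hi, his⟩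
  rw [map_apply (measurable_piecewise_prod s) (.pi t.countable_toSet fun i _ => hB i), hpre,
    prod_prod, infinitePi_pi _ fun i _ => hB i, infinitePi_pi _ fun i _ => hB i,
    prod_filter_mul_prod_filter_not]

/-- For a product measure `P`, a version of the conditional expectation of `u` given the
coordinates in `s`: the coordinates outside `s` are resampled independently. -/
noncomputable def coordCondExp (P : Measure (ι → X)) (s : Set ι) (u : (ι → X) → ℝ)
    (η : ι → X) : ℝ :=
  open Classical in ∫ ξ, u (s.piecewise η ξ) ∂P

variable {ν} {s t : Set ι} {u v w : (ι → X) → ℝ}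

theorem dependsOn_coordCondExp (P : Measure (ι → X)) (hu : DependsOn u t) :
    DependsOn (coordCondExp P s u) (s ∩ t) := by
  classical
  intro η η' h
  refine integral_congr_ae (ae_of_all _ fun ξ => hu fun i hi => ?_)
  by_cases his : i ∈ s
  · simp only [Set.piecewise_eq_of_mem _ _ _ his, h i ⟨his, hi⟩]
  · simp only [Set.piecewise_eq_of_notMem _ _ _ his]

theorem coordCondExp_of_dependsOn (P : Measure (ι → X)) [IsProbabilityMeasure P]
    (hu : DependsOn u s) : coordCondExp P s u = u := by
  classical
  ext η
  have h ξ : u (s.piecewise η ξ) = u η := hu fun i hi => Set.piecewise_eq_of_mem _ _ _ hi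
  simp [coordCondExp, h]

theorem coordCondExp_of_dependsOn_compl (P : Measure (ι → X)) (hu : DependsOn u sᶜ) :
    coordCondExp P s u = fun _ => ∫ ξ, u ξ ∂P := by
  classical
  exact funext fun _ => integral_congr_ae <| ae_of_all _ fun _ =>
    hu fun _ hi => Set.piecewise_eq_of_notMem _ _ _ hi

theorem integral_coordCondExp (hu : Integrable u ℙ) :
    ∫ η, coordCondExp ℙ s u η ∂ℙ = ∫ η, u η ∂ℙ := by
  classical
  have hmp := measurePreserving_piecewise_prod ν s
  rw [← hmp.integral_comp_of_aestronglyMeasurable hu.1,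
    integral_prod (fun p => u (s.piecewise p.1 p.2)) ((hmp.integrable_comp hu.1).2 hu)]
  rfl

theorem memLp_coordCondExp (hu : MemLp u 2 ℙ) : MemLp (coordCondExp ℙ s u) 2 ℙ := by
  classical
  have hF : MemLp (fun p => u (s.piecewise p.1 p.2)) 2 ((ℙ).prod ℙ) :=
    hu.comp_measurePreserving (measurePreserving_piecewise_prod ν s)
  have hF2 := hF.integrable_sq
  refine (memLp_two_iff_integrable_sq hF.1.integral_prod_right').2
    (hF2.integral_prod_left.mono' (hF.1.integral_prod_right'.pow 2) ?_)
  filter_upwards [(hF.integrable one_le_two).prod_right_ae, hF2.prod_right_ae] with η h1 h2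
  rw [Real.norm_of_nonneg (sq_nonneg _)]
  exact even_two.convexOn_pow.map_integral_le (continuous_pow 2).continuousOn isClosed_univ
    (ae_of_all _ fun _ => trivial) h1 h2

theorem integral_mul_coordCondExp (hw : MemLp w 2 ℙ) (hws : DependsOn w s) (hu : MemLp u 2 ℙ) :
    ∫ η, w η * coordCondExp ℙ s u η ∂ℙ = ∫ η, w η * u η ∂ℙ := by
  classical
  have hmp := measurePreserving_piecewise_prod ν s
  have hwu : Integrable (fun η => w η * u η) ℙ := hw.integrable_fun_mul hu
  rw [← hmp.integral_comp_of_aestronglyMeasurable hwu.1,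
    integral_prod (fun p => w (s.piecewise p.1 p.2) * u (s.piecewise p.1 p.2))
      ((hmp.integrable_comp hwu.1).2 hwu)]
  refine integral_congr_ae (ae_of_all _ fun η => ?_)
  simp only [coordCondExp, ← integral_const_mul]
  refine integral_congr_ae (ae_of_all _ fun ξ => ?_)
  rw [hws (y := s.piecewise η ξ) fun i hi => (Set.piecewise_eq_of_mem _ _ _ hi).symm]

theorem integral_mul_eq_mul_integral_of_disjoint (hu : MemLp u 2 ℙ) (hus : DependsOn u s)
    (hv : MemLp v 2 ℙ) (hvt : DependsOn v t) (hst : Disjoint s t) :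
    ∫ η, u η * v η ∂ℙ = (∫ η, u η ∂ℙ) * ∫ η, v η ∂ℙ := by
  rw [← integral_mul_coordCondExp hu hus hv,
    coordCondExp_of_dependsOn_compl _ (hvt.mono hst.subset_compl_left), integral_mul_const]

end Resampling

section Shift

variable {X : Type*} [MeasurableSpace X]

/-- `shift z` acts on configurations as `τ_{-z}`, so that `τ_z f = f ∘ shift z`. -/
def shift (z : ℤ) : (ℤ → X) ≃ᵐ (ℤ → X) where
  toFun η x := η (x + z)
  invFun η x := η (x - z)
  left_inv η := by ext; simp
  right_inv η := by ext; simp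
  measurable_toFun := measurable_pi_lambda _ fun _ => measurable_pi_apply _
  measurable_invFun := measurable_pi_lambda _ fun _ => measurable_pi_apply _

@[simp]
theorem shift_apply (z : ℤ) (η : ℤ → X) (x : ℤ) : shift z η x = η (x + z) := rfl

theorem shift_shift (z w : ℤ) (η : ℤ → X) : shift z (shift w η) = shift (z + w) η := by
  ext x
  simp [add_assoc]

theorem shift_zero (η : ℤ → X) : shift 0 η = η := by
  ext x
  simp

theorem DependsOn.comp_shift {u : (ℤ → X) → ℝ} {s : Set ℤ} (hu : DependsOn u s) (z : ℤ) :
    DependsOn (u ∘ shift z) ((· - z) ⁻¹' s) :=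
  fun _ _ h => hu fun x hx => h (x + z) (by simpa using hx)

variable (ν : Measure X) [IsProbabilityMeasure ν]

local notation "ℙ" => infinitePi fun _ : ℤ => ν

theorem measurePreserving_shift (z : ℤ) : MeasurePreserving (shift z) ℙ ℙ :=
  ⟨(shift z).measurable, map_infinitePi_infinitePi_of_inj (add_left_injective z)⟩

theorem integral_comp_shift (z : ℤ) (u : (ℤ → X) → ℝ) :
    ∫ η, u (shift z η) ∂ℙ = ∫ η, u η ∂ℙ :=
  (measurePreserving_shift ν z).integral_comp' u

theorem coordCondExp_comp_shift (s : Set ℤ) (z : ℤ) (u : (ℤ → X) → ℝ) (η : ℤ → X) :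
    coordCondExp ℙ ((· - z) ⁻¹' s) (u ∘ shift z) η = coordCondExp ℙ s u (shift z η) := by
  classical
  have h ξ : shift z (((· - z) ⁻¹' s).piecewise η ξ) = s.piecewise (shift z η) (shift z ξ) := by
    ext x
    by_cases hx : x ∈ s <;> simp [Set.piecewise, hx]
  simp only [coordCondExp, Function.comp_apply, h]
  exact integral_comp_shift ν z fun ξ => u (s.piecewise (shift z η) ξ)

end Shift

section MartingaleIncrement

variable {X : Type*} [MeasurableSpace X]

noncomputable def martingaleIncr (P : Measure (ℤ → X)) (k : ℤ) (u : (ℤ → X) → ℝ) :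
    (ℤ → X) → ℝ :=
  coordCondExp P (Set.Iic k) u - coordCondExp P (Set.Iic (k - 1)) u

variable {P : Measure (ℤ → X)} {k : ℤ} {u v w : (ℤ → X) → ℝ}

theorem dependsOn_martingaleIncr (P : Measure (ℤ → X)) (k : ℤ) (u : (ℤ → X) → ℝ) :
    DependsOn (martingaleIncr P k u) (Set.Iic k) := by
  intro η η' h
  simp only [martingaleIncr, Pi.sub_apply]
  rw [dependsOn_coordCondExp P (dependsOn_univ u) fun i hi => h i hi.1,
    dependsOn_coordCondExp P (dependsOn_univ u) fun i hi => h i (by grind)]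

theorem martingaleIncr_eq_zero_of_dependsOn_Iic [IsProbabilityMeasure P]
    (hu : DependsOn u (Set.Iic (k - 1))) : martingaleIncr P k u = 0 := by
  rw [martingaleIncr, coordCondExp_of_dependsOn P (hu.mono (Set.Iic_subset_Iic.2 (by omega))),
    coordCondExp_of_dependsOn P hu, sub_self]

theorem martingaleIncr_eq_zero_of_dependsOn_Ici (hu : DependsOn u (Set.Ici (k + 1))) :
    martingaleIncr P k u = 0 := by
  have hsub (j : ℤ) (hj : j ≤ k) : Set.Ici (k + 1) ⊆ (Set.Iic j)ᶜ := fun x hx hx' => by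
    simp only [Set.mem_Ici, Set.mem_Iic] at hx hx'
    omega
  rw [martingaleIncr, coordCondExp_of_dependsOn_compl P (hu.mono (hsub k le_rfl)),
    coordCondExp_of_dependsOn_compl P (hu.mono (hsub (k - 1) (by omega))), sub_self]

theorem sum_martingaleIncr [IsProbabilityMeasure P] {a b : ℤ} (hab : a ≤ b + 1)
    (hu : DependsOn u (Set.Icc a b)) (hmean : ∫ η, u η ∂P = 0) :
    ∑ k ∈ Icc a b, martingaleIncr P k u = u := by
  have hsub : Set.Icc a b ⊆ (Set.Iic (a - 1))ᶜ := fun x hx hx' => by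
    simp only [Set.mem_Icc, Set.mem_Iic] at hx hx'
    omega
  simp only [martingaleIncr]
  conv_lhs => enter [2, k, 1]; rw [← add_sub_cancel_right k 1]
  rw [Int.sum_Icc_sub (fun k => coordCondExp P (Set.Iic (k - 1)) u) hab, add_sub_cancel_right,
    coordCondExp_of_dependsOn P (hu.mono Set.Icc_subset_Iic_self),
    coordCondExp_of_dependsOn_compl P (hu.mono hsub), hmean]
  exact sub_zero u

variable {ν : Measure X} [IsProbabilityMeasure ν]

local notation "ℙ" => infinitePi fun _ : ℤ => ν

theorem memLp_martingaleIncr (k : ℤ) (hu : MemLp u 2 ℙ) : MemLp (martingaleIncr ℙ k u) 2 ℙ :=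
  (memLp_coordCondExp hu).sub (memLp_coordCondExp hu)

theorem integral_mul_martingaleIncr_eq_zero (hw : MemLp w 2 ℙ)
    (hwk : DependsOn w (Set.Iic (k - 1))) (hu : MemLp u 2 ℙ) :
    ∫ η, w η * martingaleIncr ℙ k u η ∂ℙ = 0 := by
  simp only [martingaleIncr, Pi.sub_apply, mul_sub]
  rw [integral_sub (hw.integrable_fun_mul (memLp_coordCondExp hu))
      (hw.integrable_fun_mul (memLp_coordCondExp hu)),
    integral_mul_coordCondExp hw (hwk.mono (Set.Iic_subset_Iic.2 (by omega))) hu,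
    integral_mul_coordCondExp hw hwk hu, sub_self]

theorem integral_martingaleIncr_mul_martingaleIncr (k : ℤ) (hu : MemLp u 2 ℙ)
    (hv : MemLp v 2 ℙ) :
    ∫ η, martingaleIncr ℙ k u η * martingaleIncr ℙ k v η ∂ℙ =
      ∫ η, martingaleIncr ℙ k u η * v η ∂ℙ := by
  have hPu := memLp_martingaleIncr k hu
  have hQv : MemLp (coordCondExp ℙ (Set.Iic (k - 1)) v) 2 ℙ := memLp_coordCondExp hv
  have h η : martingaleIncr ℙ k u η * martingaleIncr ℙ k v η =
      martingaleIncr ℙ k u η * coordCondExp ℙ (Set.Iic k) v η -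
        coordCondExp ℙ (Set.Iic (k - 1)) v η * martingaleIncr ℙ k u η := by
    simp only [martingaleIncr, Pi.sub_apply]
    ring
  simp_rw [h]
  rw [integral_sub (hPu.integrable_fun_mul (memLp_coordCondExp hv)) (hQv.integrable_fun_mul hPu),
    integral_mul_coordCondExp hPu (dependsOn_martingaleIncr _ k u) hv,
    integral_mul_martingaleIncr_eq_zero hQv
    ((dependsOn_coordCondExp _ (dependsOn_univ v)).mono Set.inter_subset_left) hu, sub_zero]

theorem sum_integral_martingaleIncr_mul {a b : ℤ} (hab : a ≤ b + 1)
    (hu : DependsOn u (Set.Icc a b)) (hmean : ∫ η, u η ∂ℙ = 0) (hu2 : MemLp u 2 ℙ)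
    (hv : MemLp v 2 ℙ) :
    ∑ k ∈ Icc a b, ∫ η, martingaleIncr ℙ k u η * martingaleIncr ℙ k v η ∂ℙ =
      ∫ η, u η * v η ∂ℙ := by
  simp_rw [integral_martingaleIncr_mul_martingaleIncr _ hu2 hv]
  rw [← integral_finsetSum _ fun k _ => (memLp_martingaleIncr k hu2).integrable_fun_mul hv]
  have hsum η : ∑ k ∈ Icc a b, martingaleIncr ℙ k u η = u η := by
    rw [← Finset.sum_apply, sum_martingaleIncr hab hu hmean]
  simp_rw [← Finset.sum_mul, hsum]

theorem martingaleIncr_comp_shift (k z : ℤ) (u : (ℤ → X) → ℝ) (η : ℤ → X) :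
    martingaleIncr ℙ (k + z) (u ∘ shift z) η = martingaleIncr ℙ k u (shift z η) := by
  simp only [martingaleIncr, Pi.sub_apply, ← coordCondExp_comp_shift, Set.preimage_sub_const_Iic,
    sub_add_eq_add_sub]

theorem integral_martingaleIncr_comp_shift_mul (k z : ℤ) (u v : (ℤ → X) → ℝ) :
    ∫ η, martingaleIncr ℙ (k + z) (u ∘ shift z) η * martingaleIncr ℙ (k + z) (v ∘ shift z) η ∂ℙ =
      ∫ η, martingaleIncr ℙ k u η * martingaleIncr ℙ k v η ∂ℙ := by
  simp only [martingaleIncr_comp_shift]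
  exact integral_comp_shift ν z fun η => martingaleIncr ℙ k u η * martingaleIncr ℙ k v η

end MartingaleIncrement

theorem Int.sum_Icc_sum_Icc_sub {M : Type*} [AddCommMonoid M] {a b : ℤ} (c : ℤ → ℤ → M)
    (hc : ∀ k x, c k x ≠ 0 → a + x ≤ k ∧ k ≤ b + x) :
    ∑ z ∈ Icc 0 (b - a), ∑ w ∈ Icc 0 (b - a), c (b - z) (w - z) =
      ∑ x ∈ Icc (a - b) (b - a), ∑ k ∈ Icc a b, c k x := by
  rw [← sum_product', ← sum_product_right (f := fun q => c q.1 q.2)]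
  conv_rhs => rw [← sum_filter_of_ne fun q _ => hc q.1 q.2]
  -- substitute `k = b - z`, `x = w - z`
  refine sum_nbij' (fun p => (b - p.1, p.2 - p.1)) (fun q => (b - q.1, q.2 + b - q.1))
    ?_ ?_ ?_ ?_ fun _ _ => rfl <;>
  · intro p hp
    simp only [mem_filter, mem_product, mem_Icc, Prod.ext_iff] at hp ⊢
    omega

section Corrector

variable {X : Type*} [MeasurableSpace X] (ν : Measure X)

local notation "ℙ" => infinitePi fun _ : ℤ => ν

noncomputable def corrector (u : (ℤ → X) → ℝ) (a b : ℤ) : (ℤ → X) → ℝ :=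
  -∑ z ∈ Icc 0 (b - a), coordCondExp ℙ (Set.Iic (b - 1)) (u ∘ shift z)

noncomputable def defect (u : (ℤ → X) → ℝ) (a b : ℤ) : (ℤ → X) → ℝ :=
  ∑ z ∈ Icc 0 (b - a), martingaleIncr ℙ b (u ∘ shift z)

variable {ν} {u : (ℤ → X) → ℝ} {a b : ℤ}

theorem dependsOn_corrector (hu : DependsOn u (Set.Icc a b)) :
    DependsOn (corrector ν u a b) (Set.Icc a (b - 1)) := by
  intro η η' h
  simp only [corrector, Pi.neg_apply, Finset.sum_apply]
  congr 1
  refine sum_congr rfl fun z hz => dependsOn_coordCondExp _ (hu.comp_shift z) fun x hx => h x ?_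
  simp only [mem_Icc, Set.mem_inter_iff, Set.mem_Iic, Set.mem_preimage, Set.mem_Icc] at hz hx ⊢
  omega

theorem martingaleIncr_comp_shift_eq_zero {P : Measure (ℤ → X)} [IsProbabilityMeasure P] {k x : ℤ}
    (hu : DependsOn u (Set.Icc a b)) (hkx : k < a + x ∨ b + x < k) :
    martingaleIncr P k (u ∘ shift x) = 0 := by
  rcases hkx with h | h
  · refine martingaleIncr_eq_zero_of_dependsOn_Ici ((hu.comp_shift x).mono fun y hy => ?_)
    simp only [Set.mem_preimage, Set.mem_Icc, Set.mem_Ici] at hy ⊢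
    omega
  · refine martingaleIncr_eq_zero_of_dependsOn_Iic ((hu.comp_shift x).mono fun y hy => ?_)
    simp only [Set.mem_preimage, Set.mem_Icc, Set.mem_Iic] at hy ⊢
    omega

variable [IsProbabilityMeasure ν]

theorem memLp_corrector (hu : MemLp u 2 ℙ) (a b : ℤ) : MemLp (corrector ν u a b) 2 ℙ :=
  (memLp_finsetSum' _ fun z _ =>
    memLp_coordCondExp (hu.comp_measurePreserving (measurePreserving_shift ν z))).neg

theorem integral_corrector (hu : MemLp u 2 ℙ) (hmean : ∫ η, u η ∂ℙ = 0) (a b : ℤ) :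
    ∫ η, corrector ν u a b η ∂ℙ = 0 := by
  have hF z : MemLp (u ∘ shift z) 2 ℙ := hu.comp_measurePreserving (measurePreserving_shift ν z)
  simp only [corrector, Pi.neg_apply, Finset.sum_apply]
  rw [integral_neg, integral_finsetSum _ fun z _ =>
    (memLp_coordCondExp (hF z)).integrable one_le_two, sum_eq_zero fun z _ => ?_, neg_zero]
  rw [integral_coordCondExp ((hF z).integrable one_le_two)]
  exact (integral_comp_shift ν z u).trans hmean

theorem corrector_comp_shift_sub_add_defect (hab : a ≤ b) (hu : DependsOn u (Set.Icc a b))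
    (hmean : ∫ η, u η ∂ℙ = 0) :
    corrector ν u a b ∘ shift 1 - corrector ν u a b + defect ν u a b = u := by
  let G z := coordCondExp ℙ (Set.Iic b) (u ∘ shift z)
  have hG η : corrector ν u a b (shift 1 η) = -∑ z ∈ Icc 0 (b - a), G (z + 1) η := by
    simp only [corrector, Pi.neg_apply, Finset.sum_apply, G]
    congr 1
    refine sum_congr rfl fun z _ => ?_
    rw [← coordCondExp_comp_shift, Set.preimage_sub_const_Iic, sub_add_cancel]
    congr 1
    ext ξ
    simp [shift_shift]
  have hG0 : G 0 = u := by
    simp only [G, Function.comp_def, shift_zero]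
    exact coordCondExp_of_dependsOn _ (hu.mono Set.Icc_subset_Iic_self)
  have hGlast : G (b - a + 1) = 0 := by
    have hsub : (· - (b - a + 1)) ⁻¹' Set.Icc a b ⊆ (Set.Iic b)ᶜ := fun x hx hx' => by
      simp only [Set.mem_preimage, Set.mem_Icc, Set.mem_Iic] at hx hx'
      omega
    simp only [G, coordCondExp_of_dependsOn_compl _ ((hu.comp_shift _).mono hsub),
      Function.comp_apply, integral_comp_shift, hmean]
    rfl
  calc corrector ν u a b ∘ shift 1 - corrector ν u a b + defect ν u a b
      = -∑ z ∈ Icc 0 (b - a), (G (z + 1) - G z) := by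
        ext η
        rw [Pi.add_apply, Pi.sub_apply, Function.comp_apply, hG]
        simp only [corrector, defect, martingaleIncr, Pi.neg_apply, Pi.sub_apply,
          Finset.sum_apply, sum_sub_distrib, G]
        ring
    _ = u := by rw [Int.sum_Icc_sub G (by omega), hG0, hGlast, zero_sub, neg_neg]

theorem integral_defect_sq (hab : a ≤ b) (hu : DependsOn u (Set.Icc a b))
    (hmean : ∫ η, u η ∂ℙ = 0) (hu2 : MemLp u 2 ℙ) :
    ∫ η, defect ν u a b η ^ 2 ∂ℙ = ∑ x ∈ Icc (a - b) (b - a), ∫ η, u η * u (shift x η) ∂ℙ := by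
  have hF z : MemLp (u ∘ shift z) 2 ℙ := hu2.comp_measurePreserving (measurePreserving_shift ν z)
  let c k x := ∫ η, martingaleIncr ℙ k u η * martingaleIncr ℙ k (u ∘ shift x) η ∂ℙ
  have hexpand : ∫ η, defect ν u a b η ^ 2 ∂ℙ = ∑ z ∈ Icc 0 (b - a), ∑ w ∈ Icc 0 (b - a),
      ∫ η, martingaleIncr ℙ b (u ∘ shift z) η * martingaleIncr ℙ b (u ∘ shift w) η ∂ℙ := by
    have hint z w : Integrable
        (fun η => martingaleIncr ℙ b (u ∘ shift z) η * martingaleIncr ℙ b (u ∘ shift w) η) ℙ :=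
      (memLp_martingaleIncr b (hF z)).integrable_fun_mul (memLp_martingaleIncr b (hF w))
    simp only [defect, Finset.sum_apply, sq, sum_mul_sum]
    rw [integral_finsetSum _ fun z _ => integrable_finsetSum _ fun w _ => hint z w]
    exact sum_congr rfl fun z _ => integral_finsetSum _ fun w _ => hint z w
  have hstationary z w :
      ∫ η, martingaleIncr ℙ b (u ∘ shift z) η * martingaleIncr ℙ b (u ∘ shift w) η ∂ℙ =
        c (b - z) (w - z) := by
    have hw : u ∘ shift w = (u ∘ shift (w - z)) ∘ shift z := by
      ext η
      simp [shift_shift]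
    have h := integral_martingaleIncr_comp_shift_mul (ν := ν) (b - z) z u (u ∘ shift (w - z))
    rwa [sub_add_cancel, ← hw] at h
  have hsupport k x (hkx : c k x ≠ 0) : a + x ≤ k ∧ k ≤ b + x := by
    by_contra hout
    exact hkx (by simp [c, martingaleIncr_comp_shift_eq_zero (k := k) (x := x) hu (by omega)])
  simp_rw [hexpand, hstationary]
  rw [Int.sum_Icc_sum_Icc_sub c hsupport]
  exact sum_congr rfl fun x _ => sum_integral_martingaleIncr_mul (by omega) hu hmean hu2 (hF x)

theorem defect_ae_eq_zero (hab : a ≤ b) (hu : DependsOn u (Set.Icc a b))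
    (hmean : ∫ η, u η ∂ℙ = 0) (hu2 : MemLp u 2 ℙ)
    (hsum : ∑ x ∈ Icc (a - b) (b - a), ∫ η, u η * u (shift x η) ∂ℙ = 0) :
    defect ν u a b =ᵐ[ℙ] 0 := by
  have hD : MemLp (defect ν u a b) 2 ℙ := memLp_finsetSum' _ fun z _ =>
    memLp_martingaleIncr b (hu2.comp_measurePreserving (measurePreserving_shift ν z))
  have hsq := (integral_eq_zero_iff_of_nonneg (fun η => sq_nonneg (defect ν u a b η))
    hD.integrable_sq).1 (by rw [integral_defect_sq hab hu hmean hu2, hsum])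
  filter_upwards [hsq] with η hη
  exact pow_eq_zero_iff two_ne_zero |>.1 hη

theorem integral_mul_comp_shift_eq_zero (hu : DependsOn u (Set.Icc a b))
    (hmean : ∫ η, u η ∂ℙ = 0) (hu2 : MemLp u 2 ℙ) {z : ℤ} (hz : b - a < |z|) :
    ∫ η, u η * u (shift z η) ∂ℙ = 0 := by
  have hdisj : Disjoint (Set.Icc a b) ((· - z) ⁻¹' Set.Icc a b) := by
    refine Set.disjoint_left.2 fun x hx hx' => ?_
    simp only [Set.mem_preimage, Set.mem_Icc] at hx hx'
    rcases lt_abs.1 hz with h | h <;> omega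
  have h := integral_mul_eq_mul_integral_of_disjoint hu2 hu
    (hu2.comp_measurePreserving (measurePreserving_shift ν z)) (hu.comp_shift z) hdisj
  rwa [hmean, zero_mul] at h

end Corrector

theorem IsIIDProduct.eq_infinitePi {X : Type*} [MeasurableSpace X] {ν : Measure X}
    {μ : Measure (ℤ → X)} (hμ : IsIIDProduct ν μ) : μ = infinitePi fun _ => ν := by
  simpa only [hμ.2, map_id'] using hμ.1.map_fun_eq_infinitePi_map fun x => measurable_pi_apply x

theorem IsLocal.exists_dependsOn_Icc {X : Type*} {f : (ℤ → X) → ℝ} (hf : IsLocal f) :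
    ∃ a b, a ≤ b ∧ DependsOn f (Set.Icc a b) := by
  obtain ⟨S, hS⟩ := hf
  obtain ⟨a, ha⟩ := S.bddBelow
  obtain ⟨b, hb⟩ := S.bddAbove
  exact ⟨min a b, max a b, min_le_max, fun η η' h => hS η η' fun x hx =>
    h x ⟨(min_le_left a b).trans (ha hx), (hb hx).trans (le_max_right a b)⟩⟩

theorem isLocal_of_dependsOn_Icc {X : Type*} {g : (ℤ → X) → ℝ} {a b : ℤ}
    (hg : DependsOn g (Set.Icc a b)) : IsLocal g :=
  ⟨Icc a b, fun _ _ h => hg fun x hx => h x (mem_Icc.2 hx)⟩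

theorem stmt12_general {X : Type*} [MeasurableSpace X] (ν : Measure X) [IsProbabilityMeasure ν]
    (μ : Measure (ℤ → X)) (hμ : IsIIDProduct ν μ)
    (f : (ℤ → X) → ℝ) (hloc : IsLocal f) (hL : MemLp f 2 μ)
    (hmean : ∫ η, f η ∂μ = 0)
    (hker : ∑ᶠ z : ℤ, ∫ η, f η * f (fun x => η (x + z)) ∂μ = 0) :
    ∃ g : (ℤ → X) → ℝ, IsLocal g ∧ MemLp g 2 μ ∧ (∫ η, g η ∂μ = 0) ∧
      f =ᵐ[μ] fun η => g (fun x => η (x + 1)) - g η := by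
  obtain rfl := hμ.eq_infinitePi
  obtain ⟨a, b, hab, hf⟩ := hloc.exists_dependsOn_Icc
  have hsum : ∑ z ∈ Icc (a - b) (b - a), ∫ η, f η * f (shift z η) ∂infinitePi (fun _ => ν) = 0 := by
    rwa [← finsum_eq_sum_of_support_subset]
    intro z hz
    by_contra hout
    refine hz (integral_mul_comp_shift_eq_zero hf hmean hL ?_)
    simp only [coe_Icc, Set.mem_Icc, not_and_or, not_le] at hout
    rw [lt_abs]
    omega
  refine ⟨corrector ν f a b, isLocal_of_dependsOn_Icc (dependsOn_corrector hf),
    memLp_corrector hL a b, integral_corrector hL hmean a b, ?_⟩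
  filter_upwards [defect_ae_eq_zero hab hf hmean hL hsum] with η hη
  have h := congr_fun (corrector_comp_shift_sub_add_defect hab hf hmean) η
  rw [Pi.add_apply, hη, Pi.zero_apply, add_zero] at h
  exact h.symm

/-- main theorem, d = 1: if `f ∈ L²(μ)` is local, mean zero, and
`∑_z ⟨f, τ_z f⟩ = 0` (a finitely supported sum), then `f = τg − g` for some local
mean-zero `g ∈ L²(μ)`, where `(τ_z f)(η) = f(τ_{-z}η) = f (fun x => η (x + z))`
and `τ = τ_1`. -/
theorem stmt12 {X : Type*} [MeasurableSpace X] (ν : Measure X) [IsProbabilityMeasure ν]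
    [TopologicalSpace.SeparableSpace (Lp ℝ 2 ν)]
    (μ : Measure (ℤ → X)) [IsProbabilityMeasure μ] (hμ : IsIIDProduct ν μ)
    (f : (ℤ → X) → ℝ) (hloc : IsLocal f) (hL : MemLp f 2 μ)
    (hmean : ∫ η, f η ∂μ = 0)
    (hker : ∑ᶠ z : ℤ, ∫ η, f η * f (fun x => η (x + z)) ∂μ = 0) :
    ∃ g : (ℤ → X) → ℝ, IsLocal g ∧ MemLp g 2 μ ∧ (∫ η, g η ∂μ = 0) ∧
      f =ᵐ[μ] fun η => g (fun x => η (x + 1)) - g η :=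
  stmt12_general ν μ hμ f hloc hL hmean hker
end

section
/- Let H be a Hilbert space, (h_x)_{x ∈ ℤ^d} an orthonormal family, (a_x) finitely supported with ∑ a_x = 0 and support contained in a hypercube of cardinality s, and ψ a nearest-neighbor Hamiltonian path through that hypercube. Define for each direction α: g_α = ∑_{k=2}^{s} (∑_{l=k}^{s} a_{ψ(l)}) [h_{ψ(k−1)} 1_{ψ(k)=ψ(k−1)+e_α} − h_{ψ(k)} 1_{ψ(k−1)=ψ(k)+e_α}]. Then ∑_{α=1}^d ‖g_α‖² ≤ s² ∑_x a_x². -/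
/-!
For a fixed direction `α`, the `k`-th summand of `g α` is, up to sign, `h` at the lower endpoint
of the `k`-th step of `ψ` if that step points in direction `α`, and `0` otherwise. Distinct steps
of an injective path are distinct edges, so these summands are pairwise orthogonal and
`‖g α‖² = ∑ₖ cₖ² ‖·‖²`. A step points in at most one direction, so summing over `α` leaves at
most `∑ₖ cₖ²`, and Cauchy–Schwarz bounds each `cₖ² = (∑_{l ≥ k} a (ψ l))²` by `s ∑ₓ (a x)²`.
-/

open Finset

theorem norm_sum_sq_eq_sum_norm_sq_of_pairwise_inner_eq_zero {ι E : Type*}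
    [NormedAddCommGroup E] [InnerProductSpace ℝ E] (t : Finset ι) (f : ι → E)
    (hf : (t : Set ι).Pairwise fun i j => inner ℝ (f i) (f j) = 0) :
    ‖∑ i ∈ t, f i‖ ^ 2 = ∑ i ∈ t, ‖f i‖ ^ 2 := by
  rw [← real_inner_self_eq_norm_sq, sum_inner]
  refine sum_congr rfl fun i hi => ?_
  rw [inner_sum, sum_eq_single i (fun j hj hji => hf hi hj hji.symm) (absurd hi),
    real_inner_self_eq_norm_sq]

theorem Finsupp.sum_sq_comp_le_sum_sq {α ι : Type*} (a : α →₀ ℝ) {t : Finset ι} {ψ : ι → α}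
    (hψ : Set.InjOn ψ t) : ∑ l ∈ t, a (ψ l) ^ 2 ≤ ∑ x ∈ a.support, a x ^ 2 := by
  classical
  calc ∑ l ∈ t, a (ψ l) ^ 2 = ∑ x ∈ t.image ψ, a x ^ 2 :=
        (sum_image (f := fun x => a x ^ 2) hψ).symm
    _ ≤ ∑ x ∈ t.image ψ ∪ a.support, a x ^ 2 :=
      sum_le_sum_of_subset_of_nonneg subset_union_left fun _ _ _ => sq_nonneg _
    _ = ∑ x ∈ a.support, a x ^ 2 := by
      refine (sum_subset subset_union_right fun x _ hx => ?_).symm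
      rw [Finsupp.notMem_support_iff.mp hx, sq, zero_mul]

section EdgeVector

variable {G E : Type*} [NormedAddCommGroup E] [InnerProductSpace ℝ E] [DecidableEq G]

def edgeVec [Add G] (h : G → E) (e p q : G) : E :=
  (if q = p + e then h p else 0) - (if p = q + e then h q else 0)

theorem inner_edgeVec_eq_zero [Add G] {h : G → E} (hh : Orthonormal ℝ h) (e : G) {p q p' q' : G}
    (hne : s(p, q) ≠ s(p', q')) : inner ℝ (edgeVec h e p q) (edgeVec h e p' q') = 0 := by
  rw [Ne, Sym2.eq_iff] at hne
  simp only [edgeVec, inner_sub_left, inner_sub_right]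
  split_ifs <;> simp [orthonormal_iff_ite.mp hh] <;> grind

theorem norm_edgeVec_sq_le [AddLeftCancelMonoid G] {h : G → E} (hh : Orthonormal ℝ h) {e : G}
    (he : e + e ≠ 0) (p q : G) :
    ‖edgeVec h e p q‖ ^ 2 ≤ if q = p + e ∨ p = q + e then 1 else 0 := by
  have not_both : ¬(q = p + e ∧ p = q + e) := by
    rintro ⟨hq, hp⟩
    exact he (add_left_cancel (a := q) (by rw [add_zero, ← add_assoc, ← hp, ← hq]))
  unfold edgeVec
  by_cases hq : q = p + e <;> by_cases hp : p = q + e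
  · exact absurd ⟨hq, hp⟩ not_both
  · rw [if_pos hq, if_neg hp, if_pos (.inl hq), sub_zero, hh.norm_eq_one, one_pow]
  · rw [if_neg hq, if_pos hp, if_pos (.inr hp), zero_sub, norm_neg, hh.norm_eq_one, one_pow]
  · rw [if_neg hq, if_neg hp, if_neg (not_or.mpr ⟨hq, hp⟩), sub_zero, norm_zero, sq, zero_mul]

theorem single_add_single_ne_zero {d : ℕ} (α : Fin d) :
    (Pi.single α 1 + Pi.single α 1 : Fin d → ℤ) ≠ 0 := by
  intro h
  simpa using congrFun h α

theorem card_filter_unit_step_le_one {d : ℕ} (p q : Fin d → ℤ) :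
    #{α | q = p + Pi.single α 1 ∨ p = q + Pi.single α 1} ≤ 1 := by
  refine card_le_one.mpr fun α hα β hβ => ?_
  simp only [mem_filter, mem_univ, true_and] at hα hβ
  by_contra hne
  rcases hα with rfl | rfl <;> rcases hβ with h | h <;>
    simpa [Pi.single_apply, Ne.symm hne] using congrFun h α

theorem sum_norm_edgeVec_single_sq_le {d : ℕ} {h : (Fin d → ℤ) → E} (hh : Orthonormal ℝ h) (p q : Fin d → ℤ) :
    ∑ α, ‖edgeVec h (Pi.single α 1) p q‖ ^ 2 ≤ 1 :=
  calc ∑ α, ‖edgeVec h (Pi.single α 1) p q‖ ^ 2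
      ≤ ∑ α, if q = p + Pi.single α 1 ∨ p = q + Pi.single α 1 then (1 : ℝ) else 0 :=
        sum_le_sum fun α _ => norm_edgeVec_sq_le hh (single_add_single_ne_zero α) p q
    _ = #{α | q = p + Pi.single α 1 ∨ p = q + Pi.single α 1} := by rw [sum_boole]
    _ ≤ 1 := mod_cast card_filter_unit_step_le_one p q

theorem sym2_step_ne_of_injOn {α : Type*} {ψ : ℕ → α} {s : ℕ} (hψ : Set.InjOn ψ (Set.Icc 1 s))
    {k k' : ℕ} (hk : k ∈ Icc 2 s) (hk' : k' ∈ Icc 2 s) (hne : k ≠ k') :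
    s(ψ (k - 1), ψ k) ≠ s(ψ (k' - 1), ψ k') := by
  rw [mem_Icc] at hk hk'
  rw [Ne, Sym2.eq_iff]
  rintro (⟨h₁, -⟩ | ⟨h₁, h₂⟩)
  · have := hψ ⟨by omega, by omega⟩ ⟨by omega, by omega⟩ h₁; omega
  · have := hψ ⟨by omega, by omega⟩ ⟨by omega, by omega⟩ h₁
    have := hψ ⟨by omega, by omega⟩ ⟨by omega, by omega⟩ h₂; omega

theorem sq_sum_Icc_comp_le_mul_sum_sq {α : Type*} (a : α →₀ ℝ) {ψ : ℕ → α} {s : ℕ}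
    (hψ : Set.InjOn ψ (Set.Icc 1 s)) {k : ℕ} (hk : 1 ≤ k) :
    (∑ l ∈ Icc k s, a (ψ l)) ^ 2 ≤ s * ∑ x ∈ a.support, a x ^ 2 :=
  calc (∑ l ∈ Icc k s, a (ψ l)) ^ 2 ≤ #(Icc k s) * ∑ l ∈ Icc k s, a (ψ l) ^ 2 :=
        sq_sum_le_card_mul_sum_sq
    _ ≤ s * ∑ x ∈ a.support, a x ^ 2 := by
      gcongr
      · exact_mod_cast (Nat.card_Icc k s).trans_le (by omega)
      · refine a.sum_sq_comp_le_sum_sq (hψ.mono ?_)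
        intro l hl
        simp only [coe_Icc, Set.mem_Icc] at hl ⊢
        omega

theorem norm_sum_smul_edgeVec_sq [Add G] {h : G → E} (hh : Orthonormal ℝ h) {ψ : ℕ → G} {s : ℕ}
    (hψ : Set.InjOn ψ (Set.Icc 1 s)) (c : ℕ → ℝ) (e : G) :
    ‖∑ k ∈ Icc 2 s, c k • edgeVec h e (ψ (k - 1)) (ψ k)‖ ^ 2 =
      ∑ k ∈ Icc 2 s, c k ^ 2 * ‖edgeVec h e (ψ (k - 1)) (ψ k)‖ ^ 2 := by
  rw [norm_sum_sq_eq_sum_norm_sq_of_pairwise_inner_eq_zero]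
  · simp only [norm_smul, mul_pow, Real.norm_eq_abs, sq_abs]
  · intro k hk k' hk' hne
    rw [real_inner_smul_left, real_inner_smul_right,
      inner_edgeVec_eq_zero hh e (sym2_step_ne_of_injOn hψ hk hk' hne), mul_zero, mul_zero]

end EdgeVector

theorem stmt16_general {d : ℕ} {H : Type*} [NormedAddCommGroup H] [InnerProductSpace ℝ H]
    (h : (Fin d → ℤ) → H) (hortho : Orthonormal ℝ h)
    (a : (Fin d → ℤ) →₀ ℝ)
    (s : ℕ) (ψ : ℕ → (Fin d → ℤ))
    (hinj : Set.InjOn ψ (Set.Icc 1 s))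
    (g : Fin d → H)
    (hg : ∀ α : Fin d, g α =
      ∑ k ∈ Finset.Icc 2 s, (∑ l ∈ Finset.Icc k s, a (ψ l)) •
        ((if ψ k = ψ (k - 1) + Pi.single α 1 then h (ψ (k - 1)) else 0)
          - (if ψ (k - 1) = ψ k + Pi.single α 1 then h (ψ k) else 0))) :
    ∑ α : Fin d, ‖g α‖ ^ 2 ≤ (s : ℝ) ^ 2 * ∑ x ∈ a.support, (a x) ^ 2 := by
  set c : ℕ → ℝ := fun k => ∑ l ∈ Icc k s, a (ψ l)
  set S := ∑ x ∈ a.support, a x ^ 2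
  have hg' : ∀ α, g α = ∑ k ∈ Icc 2 s, c k • edgeVec h (Pi.single α 1) (ψ (k - 1)) (ψ k) := hg
  calc ∑ α, ‖g α‖ ^ 2
      = ∑ k ∈ Icc 2 s, c k ^ 2 * ∑ α, ‖edgeVec h (Pi.single α 1) (ψ (k - 1)) (ψ k)‖ ^ 2 := by
        simp_rw [hg', norm_sum_smul_edgeVec_sq hortho hinj, mul_sum]
        exact sum_comm
    _ ≤ ∑ k ∈ Icc 2 s, s * S := sum_le_sum fun k hk =>
        (mul_le_of_le_one_right (sq_nonneg _) (sum_norm_edgeVec_single_sq_le hortho _ _)).trans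
          (sq_sum_Icc_comp_le_mul_sum_sq a hinj (one_le_two.trans (mem_Icc.mp hk).1))
    _ ≤ s * (s * S) := by
        rw [sum_const, nsmul_eq_mul]
        gcongr
        exact_mod_cast (Nat.card_Icc 2 s).trans_le (by omega)
    _ = s ^ 2 * S := by ring

/-- let `(h_x)_{x ∈ ℤ^d}` be orthonormal in a Hilbert space, `a` finitely
supported with sum zero and support contained in the image of a nearest-neighbor
injective path `ψ : {1,…,s} → ℤ^d`.  With
`g_α = ∑_{k=2}^s (∑_{l=k}^s a_{ψ(l)}) [h_{ψ(k−1)} 1_{ψ(k)=ψ(k−1)+e_α} − h_{ψ(k)} 1_{ψ(k−1)=ψ(k)+e_α}]`,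
one has `∑_α ‖g_α‖² ≤ s² ∑_x a_x²`. -/
theorem stmt16 {d : ℕ} {H : Type*} [NormedAddCommGroup H] [InnerProductSpace ℝ H]
    (h : (Fin d → ℤ) → H) (hortho : Orthonormal ℝ h)
    (a : (Fin d → ℤ) →₀ ℝ) (hsum : ∑ x ∈ a.support, a x = 0)
    (s : ℕ) (ψ : ℕ → (Fin d → ℤ))
    (hinj : Set.InjOn ψ (Set.Icc 1 s))
    (hcover : ∀ x ∈ a.support, ∃ k ∈ Finset.Icc 1 s, ψ k = x)
    (hstep : ∀ k : ℕ, 2 ≤ k → k ≤ s → ∃ α : Fin d,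
      ψ k = ψ (k - 1) + Pi.single α 1 ∨ ψ k = ψ (k - 1) - Pi.single α 1)
    (g : Fin d → H)
    (hg : ∀ α : Fin d, g α =
      ∑ k ∈ Finset.Icc 2 s, (∑ l ∈ Finset.Icc k s, a (ψ l)) •
        ((if ψ k = ψ (k - 1) + Pi.single α 1 then h (ψ (k - 1)) else 0)
          - (if ψ (k - 1) = ψ k + Pi.single α 1 then h (ψ k) else 0))) :
    ∑ α : Fin d, ‖g α‖ ^ 2 ≤ (s : ℝ) ^ 2 * ∑ x ∈ a.support, (a x) ^ 2 :=
  stmt16_general h hortho a s ψ hinj g hg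
end
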